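/- Let ω₁ be the 2-form on ℝ⁴ (coordinates (z,α,x,y)) with antisymmetric coefficient matrix A₁₂ = 2z, A₁₃ = −y, A₁₄ = x, A₂₃ = x, A₂₄ = y, A₃₄ = 2z. Define on the set {(z,α,x,y) : x² + y² > 0} the functions p₁ = z² − (x² + y²)/2, p₂ = z(x² + y²), q₁ = α, and the 1-form η = (−y dx + x dy)/(x² + y²). Then at every point with x² + y² > 0 and for all vectors v, w ∈ ℝ⁴: ω₁(v,w) = dp₁(v)·dq₁(w) − dp₁(w)·dq₁(v) + dp₂(v)·η(w) − dp₂(w)·η(v), where dp₁, dp₂, dq₁ denote the (Fréchet) differentials of these functions at the given point. That is, ω₁ = dp₁ ∧ dq₁ + dp₂ ∧ η on the complement of {x = y = 0}. -/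

import Mathlib

/-- `ℝ⁴` with coordinates `(z, α, x, y)`. -/
abbrev R4 := ℝ × ℝ × ℝ × ℝ

/-- the coordinate `z` -/
def zc (p : R4) : ℝ := p.1
/-- the coordinate `x` -/
def xc (p : R4) : ℝ := p.2.2.1
/-- the coordinate `y` -/
def yc (p : R4) : ℝ := p.2.2.2

/-- The 2-form `ω₁ = 2z(dz∧dα + dx∧dy) + x(dz∧dy − dx∧dα) − y(dz∧dx + dy∧dα)`,
evaluated at the point `p` on the pair of vectors `v, w` (components ordered as
`(z, α, x, y)`). -/
def omega1 (p v w : R4) : ℝ :=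
  2 * zc p * (v.1 * w.2.1 - v.2.1 * w.1)
    - yc p * (v.1 * w.2.2.1 - v.2.2.1 * w.1)
    + xc p * (v.1 * w.2.2.2 - v.2.2.2 * w.1)
    + xc p * (v.2.1 * w.2.2.1 - v.2.2.1 * w.2.1)
    + yc p * (v.2.1 * w.2.2.2 - v.2.2.2 * w.2.1)
    + 2 * zc p * (v.2.2.1 * w.2.2.2 - v.2.2.2 * w.2.2.1)

/-- The action coordinate `p₁ = z² − (x² + y²)/2`. -/
noncomputable def pp1 (p : R4) : ℝ := zc p ^ 2 - (xc p ^ 2 + yc p ^ 2) / 2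

/-- The action coordinate `p₂ = z(x² + y²)`. -/
def pp2 (p : R4) : ℝ := zc p * (xc p ^ 2 + yc p ^ 2)

/-- The angle coordinate `q₁ = α`. -/
def qq1 (p : R4) : ℝ := p.2.1

/-- The 1-form `η = (−y dx + x dy)/(x² + y²)`, evaluated at the point `p` on the
vector `v`. -/
noncomputable def eta (p v : R4) : ℝ :=
  (-yc p * v.2.2.1 + xc p * v.2.2.2) / (xc p ^ 2 + yc p ^ 2)


noncomputable def Zc : R4 →L[ℝ] ℝ := ContinuousLinearMap.fst ℝ ℝ (ℝ×ℝ×ℝ)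
noncomputable def Xc : R4 →L[ℝ] ℝ := (ContinuousLinearMap.fst ℝ ℝ ℝ).comp
    ((ContinuousLinearMap.snd ℝ ℝ (ℝ×ℝ)).comp (ContinuousLinearMap.snd ℝ ℝ (ℝ×ℝ×ℝ)))
noncomputable def Yc : R4 →L[ℝ] ℝ := (ContinuousLinearMap.snd ℝ ℝ ℝ).comp
    ((ContinuousLinearMap.snd ℝ ℝ (ℝ×ℝ)).comp (ContinuousLinearMap.snd ℝ ℝ (ℝ×ℝ×ℝ)))

section
variable (p v : R4)

lemma hzc : HasFDerivAt zc (Zc) p := hasFDerivAt_fst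
lemma hxc : HasFDerivAt xc (Xc) p :=
  hasFDerivAt_fst.comp p (hasFDerivAt_snd.comp p hasFDerivAt_snd)
lemma hyc : HasFDerivAt yc (Yc) p :=
  hasFDerivAt_snd.comp p (hasFDerivAt_snd.comp p hasFDerivAt_snd)

lemma hz2 : HasFDerivAt (fun q => zc q ^ 2) (zc p • Zc + zc p • Zc) p := by
  simpa [pow_two, Pi.mul_def] using (hzc p).mul (hzc p)
lemma hx2 : HasFDerivAt (fun q => xc q ^ 2) (xc p • Xc + xc p • Xc) p := by
  simpa [pow_two, Pi.mul_def] using (hxc p).mul (hxc p)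
lemma hy2 : HasFDerivAt (fun q => yc q ^ 2) (yc p • Yc + yc p • Yc) p := by
  simpa [pow_two, Pi.mul_def] using (hyc p).mul (hyc p)

lemma fp1 : fderiv ℝ pp1 p v = 2*zc p*v.1 - xc p*v.2.2.1 - yc p*v.2.2.2 := by
  have h := (hz2 p).sub (((hx2 p).add (hy2 p)).mul_const (2⁻¹:ℝ))
  have h : HasFDerivAt pp1 _ p := h
  rw [h.fderiv]
  simp [zc, xc, yc, Zc, Xc, Yc]
  ring

lemma fq1 : fderiv ℝ qq1 p v = v.2.1 := by
  have h : HasFDerivAt qq1 ((ContinuousLinearMap.fst ℝ ℝ (ℝ×ℝ)).comp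
      (ContinuousLinearMap.snd ℝ ℝ (ℝ×ℝ×ℝ))) p := hasFDerivAt_fst.comp p hasFDerivAt_snd
  rw [h.fderiv]; simp

lemma fp2 : fderiv ℝ pp2 p v = (xc p^2 + yc p^2)*v.1 + 2*zc p*xc p*v.2.2.1 + 2*zc p*yc p*v.2.2.2 := by
  have h : HasFDerivAt pp2 (zc p • (xc p • Xc + xc p • Xc + (yc p • Yc + yc p • Yc))
      + (xc p ^ 2 + yc p ^ 2) • Zc) p := (hzc p).mul ((hx2 p).add (hy2 p))
  rw [h.fderiv]
  simp [zc, xc, yc, Zc, Xc, Yc]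
  ring
end

/-- On the complement of `{x = y = 0}`, `ω₁ = dp₁ ∧ dq₁ + dp₂ ∧ η`: at every point
with `x² + y² > 0` and for all vectors `v, w`,
`ω₁(v,w) = dp₁(v)·dq₁(w) − dp₁(w)·dq₁(v) + dp₂(v)·η(w) − dp₂(w)·η(v)`,
where `dp₁, dp₂, dq₁` are the Fréchet differentials at the given point. -/
theorem omega1_eq_action_angle (p : R4) (hp : 0 < xc p ^ 2 + yc p ^ 2) (v w : R4) :
    omega1 p v w =
      fderiv ℝ pp1 p v * fderiv ℝ qq1 p w - fderiv ℝ pp1 p w * fderiv ℝ qq1 p v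
        + fderiv ℝ pp2 p v * eta p w - fderiv ℝ pp2 p w * eta p v := by
  rw [fp1, fp1, fp2, fp2, fq1, fq1]
  unfold omega1 eta
  have h0 : xc p ^ 2 + yc p ^ 2 ≠ 0 := ne_of_gt hp
  field_simp
  ring
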